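/- For every integer h, every integer k ≥ 2, every integer m ≥ 0 and every real number x, q^h · E_{m,q}^{(h,k)}(x+1) + E_{m,q}^{(h,k)}(x) = (1+q) · E_{m,q}^{(h−1,k−1)}(x). -/
import Mathlib


open Finset

/-- The q-number `[x]_q = (1 - q^x)/(1 - q)`, with `q^x = exp (x * log q)` (rpow). -/
noncomputable def qNum (q x : ℝ) : ℝ := (1 - q ^ x) / (1 - q)

/-- `[l]_{-q} = (1 - (-q)^l)/(1 + q)` for a natural number `l`. -/
noncomputable def qNumNeg (q : ℝ) (l : ℕ) : ℝ := (1 - (-q) ^ l) / (1 + q)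

/-- The higher-order q-Euler polynomial
`E_{m,q}^{(h,k)}(x) = ((1+q)^k/(1-q)^m) * Σ_{j=0}^m C(m,j) (-1)^j q^{jx} / Π_{i=0}^{k-1} (1 + q^{h+j-i})`. -/
noncomputable def qE (q : ℝ) (h : ℤ) (k m : ℕ) (x : ℝ) : ℝ :=
  ((1 + q) ^ k / (1 - q) ^ m) *
    ∑ j ∈ Finset.range (m + 1),
      (m.choose j : ℝ) * (-1) ^ j * q ^ ((j : ℝ) * x) /
        ∏ i ∈ Finset.range k, (1 + q ^ ((h : ℝ) + (j : ℝ) - (i : ℝ)))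

theorem stmt_9 (q : ℝ) (hq : 0 < q) (hq1 : q ≠ 1) (h : ℤ) (k : ℕ) (hk : 2 ≤ k)
    (m : ℕ) (x : ℝ) :
    q ^ h * qE q h k m (x + 1) + qE q h k m x = (1 + q) * qE q (h - 1) (k - 1) m x := by
  obtain ⟨n, rfl⟩ : ∃ n, k = n + 1 := ⟨k - 1, by omega⟩
  have hpos : ∀ r : ℝ, 0 < 1 + q ^ r := fun r => by positivity
  simp only [qE, Nat.add_sub_cancel]
  have hR : ∀ S : ℝ, (1 + q) * ((1 + q) ^ n / (1 - q) ^ m * S)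
      = (1 + q) ^ (n + 1) / (1 - q) ^ m * S := by intro S; ring
  rw [hR, mul_left_comm, ← mul_add]
  congr 1
  rw [Finset.mul_sum, ← Finset.sum_add_distrib]
  refine Finset.sum_congr rfl fun j hj => ?_
  have hsplit : ∏ i ∈ Finset.range (n + 1), (1 + q ^ ((h : ℝ) + (j : ℝ) - (i : ℝ)))
      = (∏ i ∈ Finset.range n, (1 + q ^ (((h - 1 : ℤ) : ℝ) + (j : ℝ) - (i : ℝ))))
        * (1 + q ^ ((h : ℝ) + (j : ℝ))) := by
    rw [Finset.prod_range_succ']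
    congr 1
    · refine Finset.prod_congr rfl fun i _ => ?_
      congr 1
      push_cast
      ring
    · norm_num
  rw [hsplit]
  have hP : (∏ i ∈ Finset.range n, (1 + q ^ (((h - 1 : ℤ) : ℝ) + (j : ℝ) - (i : ℝ)))) ≠ 0 :=
    ne_of_gt (Finset.prod_pos fun i _ => hpos _)
  have h1 : (1 + q ^ ((h : ℝ) + (j : ℝ))) ≠ 0 := ne_of_gt (hpos _)
  have e0 : q ^ h = q ^ ((h : ℤ) : ℝ) := (Real.rpow_intCast q h).symm
  have e1 : q ^ ((j : ℝ) * (x + 1)) = q ^ ((j : ℝ) * x) * q ^ (j : ℝ) := by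
    rw [← Real.rpow_add hq]; ring_nf
  have e2 : q ^ ((h : ℝ) + (j : ℝ)) = q ^ ((h : ℤ) : ℝ) * q ^ (j : ℝ) := Real.rpow_add hq _ _
  rw [e0, e1, e2]
  field_simp
  ring
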